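/- Let X, Y be real Banach spaces, T ∈ B(X,Y) with a quasi-linear projector generalized inverse T^H : Y → X, and let δT ∈ B(X,Y) be such that T^H is quasi-additive on R(δT). Put T̄ = T + δT. Assume X = N(T̄) + R(T^H) with N(T̄) ∩ R(T^H) = {0}, and Y = R(T̄) + N(T^H) with R(T̄) ∩ N(T^H) = {0}. Then I_Y + δT∘T^H has a bounded homogeneous two-sided inverse, and Υ = T^H ∘ (I_Y + δT T^H)^{-1} = (I_X + T^H δT)^{-1} ∘ T^H is a bounded homogeneous operator. -/

import Mathlib

/-! The perturbation is transported to `X`, where `B = I + T^H δT` is a bounded *linear* operator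
because `T^H` is quasi-additive on `R(δT)`. The two complementarity conditions make `B` injective
and surjective, so `B` has a bounded linear inverse `S` by the open mapping theorem. Then
`Ψ = I - δT S T^H` inverts `I + δT T^H`, as in the Woodbury identity, and `T^H Ψ = S T^H`. -/

open Metric Set

variable {X Y : Type*} [NormedAddCommGroup X] [NormedSpace ℝ X]
  [NormedAddCommGroup Y] [NormedSpace ℝ Y]

/-- `F` is a bounded homogeneous operator: `F (c • x) = c • F x` for all real `c`,
and `F` maps bounded sets to bounded sets (equivalently, `‖F x‖ ≤ M * ‖x‖`). -/
def BddHomOp (F : X → Y) : Prop :=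
  (∀ (c : ℝ) (x : X), F (c • x) = c • F x) ∧ ∃ M : ℝ, ∀ x, ‖F x‖ ≤ M * ‖x‖

/-- The norm of a (homogeneous) map: `sup {‖F x‖ : ‖x‖ = 1}`. -/
noncomputable def hnorm (F : X → Y) : ℝ :=
  sSup ((fun x => ‖F x‖) '' {x : X | ‖x‖ = 1})

/-- `F` is quasi-additive on the subset `M`. -/
def QuasiAdditiveOn (F : X → Y) (M : Set X) : Prop :=
  ∀ x : X, ∀ z ∈ M, F (x + z) = F x + F z

/-- `S` is a bounded homogeneous generalized inverse of `T`: `T S T = T` and `S T S = S`. -/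
def GenInv (T : X →L[ℝ] Y) (S : Y → X) : Prop :=
  BddHomOp S ∧ (∀ x, T (S (T x)) = T x) ∧ (∀ y, S (T (S y)) = S y)

/-- A subset `V` is Chebyshev: every point has a unique nearest point in `V`. -/
def IsChebyshev (V : Set X) : Prop :=
  ∀ x : X, ∃! v, v ∈ V ∧ ‖x - v‖ = Metric.infDist x V

/-- `p` is the metric projector onto `V`: `p x ∈ V` is a nearest point to `x` in `V`. -/
def IsMetricProjOn (V : Set X) (p : X → X) : Prop :=
  ∀ x, p x ∈ V ∧ ‖x - p x‖ = Metric.infDist x V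

/-- `TH` is a quasi-linear projector generalized inverse of `T`. -/
def QLPGenInv (T : X →L[ℝ] Y) (TH : Y → X) : Prop :=
  BddHomOp TH ∧ (∀ x, T (TH (T x)) = T x) ∧ (∀ y, TH (T (TH y)) = TH y) ∧
  (∃ P : X →L[ℝ] X, (∀ x, P (P x) = P x) ∧ Set.range ⇑P = {x : X | T x = 0} ∧
    ∀ x, TH (T x) = x - P x) ∧
  (∃ Q : Y → Y, BddHomOp Q ∧ (∀ y, Q (Q y) = Q y) ∧ QuasiAdditiveOn Q (Set.range Q) ∧
    Set.range Q = Set.range ⇑T ∧ ∀ y, T (TH y) = Q y)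

open Function

section

variable {Z : Type*} [NormedAddCommGroup Z] [NormedSpace ℝ Z]

theorem ContinuousLinearMap.bddHomOp (A : X →L[ℝ] Y) : BddHomOp A :=
  ⟨A.map_smul, ‖A‖, A.le_opNorm⟩

namespace BddHomOp

variable {F G : X → Y}

theorem map_neg (hF : BddHomOp F) (x : X) : F (-x) = -F x := by
  simpa using hF.1 (-1) x

theorem exists_nonneg_bound (hF : BddHomOp F) : ∃ M, 0 ≤ M ∧ ∀ x, ‖F x‖ ≤ M * ‖x‖ := by
  obtain ⟨M, hM⟩ := hF.2
  exact ⟨max M 0, le_max_right _ _, fun x =>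
    (hM x).trans (mul_le_mul_of_nonneg_right (le_max_left _ _) (norm_nonneg _))⟩

theorem comp {H : Y → Z} (hH : BddHomOp H) (hF : BddHomOp F) : BddHomOp (H ∘ F) := by
  obtain ⟨MH, hMH, hH'⟩ := hH.exists_nonneg_bound
  obtain ⟨MF, hF'⟩ := hF.2
  refine ⟨fun c x => by simp only [comp_apply, hF.1, hH.1], MH * MF, fun x => ?_⟩
  calc ‖H (F x)‖ ≤ MH * ‖F x‖ := hH' _
    _ ≤ MH * (MF * ‖x‖) := mul_le_mul_of_nonneg_left (hF' x) hMH
    _ = MH * MF * ‖x‖ := (mul_assoc _ _ _).symm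

theorem sub (hF : BddHomOp F) (hG : BddHomOp G) : BddHomOp (fun x => F x - G x) := by
  obtain ⟨MF, hF'⟩ := hF.2
  obtain ⟨MG, hG'⟩ := hG.2
  refine ⟨fun c x => by simp only [hF.1, hG.1, smul_sub], MF + MG, fun x => ?_⟩
  calc ‖F x - G x‖ ≤ ‖F x‖ + ‖G x‖ := norm_sub_le _ _
    _ ≤ MF * ‖x‖ + MG * ‖x‖ := add_le_add (hF' x) (hG' x)
    _ = (MF + MG) * ‖x‖ := (add_mul _ _ _).symm

noncomputable def compCLM (hF : BddHomOp F) (A : Z →L[ℝ] X) (hq : QuasiAdditiveOn F (Set.range A)) :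
    Z →L[ℝ] Y :=
  LinearMap.mkContinuousOfExistsBound
    { toFun := F ∘ A
      map_add' := fun a b => by simp only [comp_apply, map_add, hq (A a) (A b) ⟨b, rfl⟩]
      map_smul' := fun c a => by simp only [comp_apply, map_smul, hF.1, RingHom.id_apply] }
    (hF.comp A.bddHomOp).2

@[simp]
theorem compCLM_apply (hF : BddHomOp F) (A : Z →L[ℝ] X) (hq : QuasiAdditiveOn F (Set.range A))
    (z : Z) : hF.compCLM A hq z = F (A z) :=
  rfl

end BddHomOp

end

namespace QLPGenInv

variable {T : X →L[ℝ] Y} {TH : Y → X}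

theorem quasiAdditiveOn_range (h : QLPGenInv T TH) : QuasiAdditiveOn TH (Set.range T) := by
  obtain ⟨-, hTTHT, hTHTTH, ⟨P, -, -, hPT⟩, ⟨Q, -, -, hQqa, -, hQT⟩⟩ := h
  have hP : ∀ y, P (TH y) = 0 := fun y => by
    have h := hPT (TH y)
    rw [hTHTTH] at h
    exact sub_eq_self.mp h.symm
  rintro y _ ⟨u, rfl⟩
  have hQTu : Q (T u) = T u := by rw [← hQT, hTTHT]
  calc TH (y + T u) = TH (Q (y + T u)) := by rw [← hQT, hTHTTH]
    _ = TH (T (TH y + u)) := by rw [hQqa y (T u) ⟨T u, hQTu⟩, hQTu, ← hQT, map_add]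
    _ = TH y + TH (T u) := by rw [hPT, hPT, map_add, hP]; abel

end QLPGenInv

section Perturbation

variable {T δT : X →L[ℝ] Y} {TH : Y → X}

theorem eq_zero_of_add_comp_perturb_eq_zero (hTH : BddHomOp TH) (hTHTTH : ∀ y, TH (T (TH y)) = TH y)
    (hq : QuasiAdditiveOn TH (Set.range δT))
    (hX2 : {z : X | (T + δT) z = 0} ∩ Set.range TH = {0})
    (hY2 : Set.range ⇑(T + δT) ∩ {w : Y | TH w = 0} = {0}) {x : X}
    (hx : x + TH (δT x) = 0) : x = 0 := by
  have hx_range : TH (δT (-x)) = x := by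
    rw [map_neg, hTH.map_neg, ← add_eq_zero_iff_neg_eq', hx]
  have hTHx : TH ((T + δT) x) = 0 := by
    rw [add_apply, hq _ _ ⟨x, rfl⟩, ← hx_range, hTHTTH, hx_range, hx]
  have hTx : (T + δT) x = 0 := hY2.subset ⟨⟨x, rfl⟩, hTHx⟩
  exact hX2.subset ⟨hTx, _, hx_range⟩

theorem surjective_add_perturb_comp (hTHTTH : ∀ y, TH (T (TH y)) = TH y)
    (hqT : QuasiAdditiveOn TH (Set.range T))
    (hX1 : ∀ x : X, ∃ u ∈ {z : X | (T + δT) z = 0}, ∃ v ∈ Set.range TH, x = u + v)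
    (hY1 : ∀ y : Y, ∃ u ∈ Set.range ⇑(T + δT), ∃ v ∈ {w : Y | TH w = 0}, y = u + v) :
    Surjective fun z => z + δT (TH z) := by
  intro y
  obtain ⟨-, ⟨a, rfl⟩, w, hw, rfl⟩ := hY1 y
  obtain ⟨n, hn, -, ⟨s, rfl⟩, rfl⟩ := hX1 a
  have hw : TH w = 0 := hw
  have hn : (T + δT) n = 0 := hn
  have hTHz : TH (w + T (TH s)) = TH s := by
    rw [hqT w _ ⟨_, rfl⟩, hw, hTHTTH, zero_add]
  refine ⟨w + T (TH s), ?_⟩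
  dsimp only
  rw [hTHz, map_add, hn, zero_add, add_apply]
  abel

theorem surjective_add_comp_perturb (hTH : BddHomOp TH) (hTHTTH : ∀ y, TH (T (TH y)) = TH y)
    (hqT : QuasiAdditiveOn TH (Set.range T)) (hq : QuasiAdditiveOn TH (Set.range δT))
    (hX1 : ∀ x : X, ∃ u ∈ {z : X | (T + δT) z = 0}, ∃ v ∈ Set.range TH, x = u + v)
    (hY1 : ∀ y : Y, ∃ u ∈ Set.range ⇑(T + δT), ∃ v ∈ {w : Y | TH w = 0}, y = u + v) :
    Surjective fun x => x + TH (δT x) := by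
  intro x
  obtain ⟨n, hn, -, ⟨s, rfl⟩, rfl⟩ := hX1 x
  -- `n + T^H (δT n) = n - T^H (T n)`, and the correction `T^H z` supplies `T^H s + T^H (T n)`.
  obtain ⟨z, hz : z + δT (TH z) = s + T n⟩ :=
    surjective_add_perturb_comp hTHTTH hqT hX1 hY1 (s + T n)
  have hδTn : δT n = -T n := eq_neg_of_add_eq_zero_right hn
  have hB : TH z + TH (δT (TH z)) = TH s + TH (T n) := by
    rw [← hq _ _ ⟨_, rfl⟩, hz, hqT _ _ ⟨_, rfl⟩]
  refine ⟨n + TH z, ?_⟩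
  dsimp only
  rw [map_add, hq _ _ ⟨_, rfl⟩, hδTn, hTH.map_neg]
  linear_combination (norm := abel) hB

theorem bijective_id_add_compCLM (hTH : QLPGenInv T TH) (hq : QuasiAdditiveOn TH (Set.range δT))
    (hX1 : ∀ x : X, ∃ u ∈ {z : X | (T + δT) z = 0}, ∃ v ∈ Set.range TH, x = u + v)
    (hX2 : {z : X | (T + δT) z = 0} ∩ Set.range TH = {0})
    (hY1 : ∀ y : Y, ∃ u ∈ Set.range ⇑(T + δT), ∃ v ∈ {w : Y | TH w = 0}, y = u + v)
    (hY2 : Set.range ⇑(T + δT) ∩ {w : Y | TH w = 0} = {0}) :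
    Bijective (ContinuousLinearMap.id ℝ X + hTH.1.compCLM δT hq) :=
  ⟨(injective_iff_map_eq_zero _).mpr fun _ hx =>
      eq_zero_of_add_comp_perturb_eq_zero hTH.1 hTH.2.2.1 hq hX2 hY2 hx,
    surjective_add_comp_perturb hTH.1 hTH.2.2.1 hTH.quasiAdditiveOn_range hq hX1 hY1⟩

end Perturbation

def woodburyInv (δT : X →L[ℝ] Y) (TH : Y → X) (S : X →L[ℝ] X) (y : Y) : Y :=
  y - δT (S (TH y))

section Woodbury

variable {δT : X →L[ℝ] Y} {TH : Y → X} {S : X →L[ℝ] X}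

theorem apply_woodburyInv (hTH : BddHomOp TH) (hq : QuasiAdditiveOn TH (Set.range δT))
    (hS : ∀ x, S x + TH (δT (S x)) = x) (y : Y) : TH (woodburyInv δT TH S y) = S (TH y) := by
  rw [woodburyInv, sub_eq_add_neg, ← map_neg, hq _ _ ⟨_, rfl⟩, map_neg, hTH.map_neg]
  linear_combination (norm := abel) -hS (TH y)

theorem woodburyInv_add_apply (hTH : BddHomOp TH) (hq : QuasiAdditiveOn TH (Set.range δT))
    (hS : ∀ x, S x + TH (δT (S x)) = x) (y : Y) :
    woodburyInv δT TH S y + δT (TH (woodburyInv δT TH S y)) = y := by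
  rw [apply_woodburyInv hTH hq hS, woodburyInv, sub_add_cancel]

theorem woodburyInv_apply_add (hq : QuasiAdditiveOn TH (Set.range δT))
    (hS : ∀ x, S (x + TH (δT x)) = x) (y : Y) : woodburyInv δT TH S (y + δT (TH y)) = y := by
  rw [woodburyInv, hq _ _ ⟨_, rfl⟩, hS, add_sub_cancel_right]

theorem bddHomOp_woodburyInv (hTH : BddHomOp TH) : BddHomOp (woodburyInv δT TH S) :=
  (ContinuousLinearMap.id ℝ Y).bddHomOp.sub ((δT ∘L S).bddHomOp.comp hTH)

end Woodbury

theorem stmt_14_general [CompleteSpace X] (T δT : X →L[ℝ] Y)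
    (TH : Y → X) (hTH : QLPGenInv T TH)
    (hq : QuasiAdditiveOn TH (Set.range ⇑δT))
    (hX1 : ∀ x : X, ∃ u ∈ {z : X | (T + δT) z = 0}, ∃ v ∈ Set.range TH, x = u + v)
    (hX2 : {z : X | (T + δT) z = 0} ∩ Set.range TH = {0})
    (hY1 : ∀ y : Y, ∃ u ∈ Set.range ⇑(T + δT), ∃ v ∈ {w : Y | TH w = 0}, y = u + v)
    (hY2 : Set.range ⇑(T + δT) ∩ {w : Y | TH w = 0} = {0}) :
    ∃ Ψ : Y → Y, BddHomOp Ψ ∧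
      (∀ y, Ψ y + δT (TH (Ψ y)) = y) ∧ (∀ y, Ψ (y + δT (TH y)) = y) ∧
      BddHomOp (fun y => TH (Ψ y)) ∧
      (∀ y, TH (Ψ y) + TH (δT (TH (Ψ y))) = TH y) := by
  obtain ⟨hinj, hsurj⟩ := bijective_id_add_compCLM hTH hq hX1 hX2 hY1 hY2
  set B := ContinuousLinearMap.id ℝ X + hTH.1.compCLM δT hq
  set E := ContinuousLinearEquiv.ofBijective B (LinearMap.ker_eq_bot.mpr hinj)
    (LinearMap.range_eq_top.mpr hsurj)
  have hBS : ∀ x, E.symm x + TH (δT (E.symm x)) = x := E.apply_symm_apply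
  have hSB : ∀ x, E.symm (x + TH (δT x)) = x := E.symm_apply_apply
  have hTHΨ := apply_woodburyInv (S := E.symm.toContinuousLinearMap) hTH.1 hq hBS
  refine ⟨woodburyInv δT TH E.symm.toContinuousLinearMap, bddHomOp_woodburyInv hTH.1,
    woodburyInv_add_apply hTH.1 hq hBS, woodburyInv_apply_add hq hSB, ?_, fun y => ?_⟩
  · simp only [hTHΨ]
    exact E.symm.toContinuousLinearMap.bddHomOp.comp hTH.1
  · rw [hTHΨ]
    exact hBS (TH y)

theorem stmt_14 [CompleteSpace X] [CompleteSpace Y] (T δT : X →L[ℝ] Y)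
    (TH : Y → X) (hTH : QLPGenInv T TH)
    (hq : QuasiAdditiveOn TH (Set.range ⇑δT))
    (hX1 : ∀ x : X, ∃ u ∈ {z : X | (T + δT) z = 0}, ∃ v ∈ Set.range TH, x = u + v)
    (hX2 : {z : X | (T + δT) z = 0} ∩ Set.range TH = {0})
    (hY1 : ∀ y : Y, ∃ u ∈ Set.range ⇑(T + δT), ∃ v ∈ {w : Y | TH w = 0}, y = u + v)
    (hY2 : Set.range ⇑(T + δT) ∩ {w : Y | TH w = 0} = {0}) :
    ∃ Ψ : Y → Y, BddHomOp Ψ ∧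
      (∀ y, Ψ y + δT (TH (Ψ y)) = y) ∧ (∀ y, Ψ (y + δT (TH y)) = y) ∧
      BddHomOp (fun y => TH (Ψ y)) ∧
      (∀ y, TH (Ψ y) + TH (δT (TH (Ψ y))) = TH y) :=
  stmt_14_general T δT TH hTH hq hX1 hX2 hY1 hY2
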